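/- Let $n \geq 3$ and suppose $L : (\mathbb{Z}/n\mathbb{Z})^d \to \{C,A,T\}$ satisfies: the points labeled $A$ are exactly those with $x_d$ even, the total number of CAT occurrences is $(3^{d-1}/2)n^d$. Then for every point $p$ with $x_d$ odd: if $L(p) = C$ then $L(p + 2e_d) = T$, and if $L(p) = T$ then $L(p + 2e_d) = C$; moreover $L(p + 2e_j) = L(p)$ for all $j < d$. -/
import Mathlib


open Finset

inductive Letter | C | A | T
deriving DecidableEq

lemma card_ne_aux (d : ℕ) (i : Fin d) : Fintype.card {j : Fin d // j ≠ i} = d - 1 := by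
  simp [Fintype.card_subtype_compl]

lemma count_split {d : ℕ} {α : Type*} [Fintype α] [DecidableEq α] (i : Fin d)
    (P Q : α → Prop) [DecidablePred P] [DecidablePred Q] :
    (univ.filter (fun v : Fin d → α => P (v i) ∧ ∀ j, j ≠ i → Q (v j))).card
      = (univ.filter P).card * (univ.filter Q).card ^ (d - 1) := by
  rw [← Fintype.card_subtype, ← Fintype.card_subtype]
  have e : {v : Fin d → α // P (v i) ∧ ∀ j, j ≠ i → Q (v j)}
      ≃ {a // P a} × ({j : Fin d // j ≠ i} → {a // Q a}) := by
    refine ((Equiv.piSplitAt i (fun _ => α)).subtypeEquiv ?_).trans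
      (Equiv.subtypeProdEquivProd.trans (Equiv.prodCongrRight (fun _ => Equiv.subtypePiEquivPi)))
    intro v
    simp only [Equiv.piSplitAt_apply]
    constructor
    · rintro ⟨h1, h2⟩; exact ⟨h1, fun j => h2 j j.2⟩
    · rintro ⟨h1, h2⟩; exact ⟨h1, fun j hj => h2 ⟨j, hj⟩⟩
  rw [Fintype.card_congr e, Fintype.card_prod, Fintype.card_fun, card_ne_aux,
    Fintype.card_subtype, Fintype.card_subtype]

lemma range_odd_card (n : ℕ) : ((Finset.range n).filter (fun i => i % 2 = 1)).card = n / 2 := by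
  induction n with
  | zero => simp
  | succ m ih =>
    rw [Finset.range_add_one, Finset.filter_insert]
    by_cases h : m % 2 = 1
    · rw [if_pos h, Finset.card_insert_of_notMem (by simp), ih]; omega
    · rw [if_neg h, ih]; omega

lemma zmod_odd_card (n : ℕ) [NeZero n] :
    (Finset.univ.filter (fun a : ZMod n => a.val % 2 = 1)).card = n / 2 := by
  rw [← range_odd_card n]
  apply Finset.card_bij (fun a _ => a.val)
  · intro a ha; simp only [mem_filter, mem_range, mem_univ] at *
    exact ⟨ZMod.val_lt a, ha.2⟩
  · intro a _ b _ h; exact ZMod.val_injective n h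
  · intro b hb; simp only [mem_filter, mem_range] at hb
    exact ⟨(b : ZMod n), by simp [ZMod.val_cast_of_lt hb.1, hb.2], ZMod.val_cast_of_lt hb.1⟩

section
variable (n : ℕ) [NeZero n] (hn : 3 ≤ n)

lemma cast_ne_aux (a b : ℕ) (ha : a < n) (hb : b < n) (hab : a ≠ b) : (a : ZMod n) ≠ b := by
  intro h
  apply hab
  rw [← ZMod.val_cast_of_lt ha, ← ZMod.val_cast_of_lt hb, h]

include hn

lemma neg_one_eq_aux : (-1 : ZMod n) = ((n-1 : ℕ) : ZMod n) := by
  have h1 : (1:ℕ) ≤ n := by omega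
  have : ((n-1:ℕ) : ZMod n) = (n : ZMod n) - 1 := by push_cast [h1]; ring
  rw [this, ZMod.natCast_self]; ring

lemma zm_one_ne_zero : (1 : ZMod n) ≠ 0 := by
  have := cast_ne_aux n 1 0 (by omega) (by omega) (by omega); simpa using this

lemma zm_neg_one_ne_zero : (-1 : ZMod n) ≠ 0 := by
  rw [neg_one_eq_aux n hn]
  have := cast_ne_aux n (n-1) 0 (by omega) (by omega) (by omega); simpa using this

lemma zm_one_ne_neg_one : (1 : ZMod n) ≠ -1 := by
  rw [neg_one_eq_aux n hn]
  have := cast_ne_aux n 1 (n-1) (by omega) (by omega) (by omega); simpa using this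

lemma card_two_aux : (Finset.univ.filter (fun a : ZMod n => a = 1 ∨ a = -1)).card = 2 := by
  have : (Finset.univ.filter (fun a : ZMod n => a = 1 ∨ a = -1)) = {1, -1} := by
    ext a; simp [mem_insert]
  rw [this, Finset.card_insert_of_notMem (by simp [zm_one_ne_neg_one n hn]),
    Finset.card_singleton]

lemma card_three_aux :
    (Finset.univ.filter (fun a : ZMod n => a = 0 ∨ a = 1 ∨ a = -1)).card = 3 := by
  have : (Finset.univ.filter (fun a : ZMod n => a = 0 ∨ a = 1 ∨ a = -1)) = {0, 1, -1} := by
    ext a; simp [mem_insert]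
  rw [this]
  rw [Finset.card_insert_of_notMem
      (by simp [Ne.symm (zm_one_ne_zero n hn), Ne.symm (zm_neg_one_ne_zero n hn)]),
    Finset.card_insert_of_notMem (by simp [zm_one_ne_neg_one n hn]), Finset.card_singleton]
end

theorem stmt_18 (n d : ℕ) [NeZero n] (hn : 3 ≤ n) (hd : 1 ≤ d)
    (L : (Fin d → ZMod n) → Letter)
    (last : Fin d) (hlast : (last : ℕ) = d - 1)
    (hA : ∀ x : Fin d → ZMod n, L x = Letter.A ↔ (x last).val % 2 = 0)
    (heq : ((Finset.univ.filter
        (fun p : (Fin d → ZMod n) × (Fin d → ZMod n) =>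
          (∀ j, p.2 j = 0 ∨ p.2 j = 1 ∨ p.2 j = -1) ∧ p.2 ≠ 0 ∧
          L p.1 = Letter.C ∧ L (p.1 + p.2) = Letter.A ∧
          L (p.1 + 2 • p.2) = Letter.T)).card : ℝ)
      = 3 ^ (d - 1) * n ^ d / 2) :
    ∀ p : Fin d → ZMod n, (p last).val % 2 = 1 →
      (L p = Letter.C → L (p + 2 • Pi.single last 1) = Letter.T) ∧
      (L p = Letter.T → L (p + 2 • Pi.single last 1) = Letter.C) ∧
      (∀ j : Fin d, j ≠ last → L (p + 2 • Pi.single j 1) = L p) := by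
  classical
  set S := (Finset.univ.filter
        (fun p : (Fin d → ZMod n) × (Fin d → ZMod n) =>
          (∀ j, p.2 j = 0 ∨ p.2 j = 1 ∨ p.2 j = -1) ∧ p.2 ≠ 0 ∧
          L p.1 = Letter.C ∧ L (p.1 + p.2) = Letter.A ∧
          L (p.1 + 2 • p.2) = Letter.T)) with hSdef
  have hmemS : ∀ q : (Fin d → ZMod n) × (Fin d → ZMod n), q ∈ S ↔
      ((∀ j, q.2 j = 0 ∨ q.2 j = 1 ∨ q.2 j = -1) ∧ q.2 ≠ 0 ∧
      L q.1 = Letter.C ∧ L (q.1 + q.2) = Letter.A ∧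
      L (q.1 + 2 • q.2) = Letter.T) := by
    intro q; rw [hSdef, Finset.mem_filter]; simp
  have h2card : 2 * S.card = 3 ^ (d-1) * n ^ d := by
    have h : (2 * S.card : ℝ) = 3 ^ (d-1) * n ^ d := by rw [heq]; ring
    exact_mod_cast h
  -- n must be even
  have hne : 2 ∣ n := by
    by_contra hodd
    have h1 : (3 ^ (d-1) * n ^ d) % 2 = 1 := by
      have hn2 : n % 2 = 1 := by omega
      have h3 : Odd (3 ^ (d-1) * n ^ d) :=
        Odd.mul (Odd.pow (⟨1, by norm_num⟩ : Odd 3)) (Odd.pow (Nat.odd_iff.mpr hn2))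
      exact Nat.odd_iff.mp h3
    omega
  -- parity helpers
  have par : ∀ a b : ZMod n, (a + b).val % 2 = (a.val + b.val) % 2 := fun a b => by
    rw [ZMod.val_add, Nat.mod_mod_of_dvd _ hne]
  have par2 : ∀ a b : ZMod n, (a + (b + b)).val % 2 = a.val % 2 := by
    intro a b
    rw [par]
    have hb := par b b
    omega
  have hpar2 : ∀ (x w : Fin d → ZMod n) (i : Fin d),
      ((x + 2 • w) i).val % 2 = (x i).val % 2 := by
    intro x w i
    have h : (x + 2 • w) i = x i + (w i + w i) := by
      simp [two_nsmul, two_mul]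
    rw [h, par2]
  -- the candidate set
  set Cand := ((Finset.univ.filter (fun x : Fin d → ZMod n =>
        (x last).val % 2 = 1 ∧ ∀ j, j ≠ last → True)) ×ˢ
      (Finset.univ.filter (fun v : Fin d → ZMod n =>
        (v last = 1 ∨ v last = -1) ∧
          ∀ j, j ≠ last → (v j = 0 ∨ v j = 1 ∨ v j = -1)))) with hCdef
  have hmemC : ∀ q : (Fin d → ZMod n) × (Fin d → ZMod n), q ∈ Cand ↔
      ((q.1 last).val % 2 = 1 ∧ (q.2 last = 1 ∨ q.2 last = -1) ∧
        ∀ j, j ≠ last → (q.2 j = 0 ∨ q.2 j = 1 ∨ q.2 j = -1)) := by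
    intro q
    rw [hCdef, Finset.mem_product, Finset.mem_filter, Finset.mem_filter]
    simp only [Finset.mem_univ, true_and]
    tauto
  have hCcard : Cand.card = 3 ^ (d-1) * n ^ d := by
    rw [hCdef, Finset.card_product,
      count_split last (fun a : ZMod n => a.val % 2 = 1) (fun _ : ZMod n => True),
      count_split last (fun a : ZMod n => a = 1 ∨ a = -1)
        (fun a : ZMod n => a = 0 ∨ a = 1 ∨ a = -1),
      zmod_odd_card, card_two_aux n hn, card_three_aux n hn]
    have htrue : (Finset.univ.filter (fun _ : ZMod n => True)).card = n := by
      simp [ZMod.card]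
    rw [htrue]
    obtain ⟨m, hm⟩ := hne
    have hd1 : d - 1 + 1 = d := by omega
    have hm2 : n / 2 = m := by omega
    rw [hm2]
    have hpow : n ^ d = n * n ^ (d-1) := by
      conv_lhs => rw [← hd1]
      rw [pow_succ]; ring
    rw [hpow, hm]; ring
  -- the involution
  set g : (Fin d → ZMod n) × (Fin d → ZMod n) → (Fin d → ZMod n) × (Fin d → ZMod n) :=
    fun q => (q.1 + 2 • q.2, -q.2) with hgdef
  have hcancel : ∀ x v : Fin d → ZMod n, x + 2 • v + 2 • (-v) = x := by
    intro x v
    simp only [two_nsmul]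
    abel
  have hinv : Function.Involutive g := by
    intro q
    simp only [hgdef]
    exact Prod.ext (hcancel q.1 q.2) (neg_neg q.2)
  -- S and g(S) sit inside Cand
  have hSC : ∀ q ∈ S, q ∈ Cand := by
    intro q hq
    rw [hmemS] at hq
    obtain ⟨hall, hne0, hC, hAmid, hT⟩ := hq
    have h0 : (q.1 last).val % 2 ≠ 0 := by
      intro h
      have h' : L q.1 = Letter.A := (hA q.1).mpr h
      rw [hC] at h'
      exact Letter.noConfusion h'
    have hodd : (q.1 last).val % 2 = 1 := by omega
    have hmid : ((q.1 + q.2) last).val % 2 = 0 := (hA _).mp hAmid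
    have hvlast : q.2 last = 1 ∨ q.2 last = -1 := by
      rcases hall last with h | h | h
      · exfalso
        have he : (q.1 + q.2) last = q.1 last := by simp [h]
        rw [he] at hmid; omega
      · exact Or.inl h
      · exact Or.inr h
    exact (hmemC q).mpr ⟨hodd, hvlast, fun j _ => hall j⟩
  have hgC : ∀ q ∈ S, g q ∈ Cand := by
    intro q hq
    have hqC := (hmemC q).mp (hSC q hq)
    obtain ⟨hodd, hvl, hrest⟩ := hqC
    rw [hmemC]
    refine ⟨?_, ?_, ?_⟩
    · simp only [hgdef]
      rw [hpar2 q.1 q.2 last]; exact hodd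
    · simp only [hgdef, Pi.neg_apply]
      rcases hvl with h | h <;> simp [h]
    · intro j hj
      simp only [hgdef, Pi.neg_apply]
      rcases hrest j hj with h | h | h <;> simp [h]
  -- disjointness
  have hdisj : Disjoint S (S.image g) := by
    rw [Finset.disjoint_left]
    intro q hq hq'
    obtain ⟨r, hr, hgr⟩ := Finset.mem_image.mp hq'
    have hinvr := hinv r
    rw [hgr] at hinvr
    have hrS := hr
    rw [hmemS] at hq hrS
    have hC : L ((g q).1) = Letter.C := by rw [hinvr]; exact hrS.2.2.1
    have hT : L (q.1 + 2 • q.2) = Letter.T := hq.2.2.2.2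
    simp only [hgdef] at hC
    rw [hC] at hT
    exact Letter.noConfusion hT
  have himg : (S.image g).card = S.card :=
    Finset.card_image_of_injective S hinv.injective
  have hsub : S ∪ S.image g ⊆ Cand :=
    Finset.union_subset (fun q hq => hSC q hq) (Finset.image_subset_iff.mpr hgC)
  have hunionEq : S ∪ S.image g = Cand := by
    apply Finset.eq_of_subset_of_card_le hsub
    rw [Finset.card_union_of_disjoint hdisj, himg, hCcard]
    omega
  -- the key dichotomy
  have key : ∀ x v : Fin d → ZMod n, (x last).val % 2 = 1 →
      (v last = 1 ∨ v last = -1) →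
      (∀ j, j ≠ last → (v j = 0 ∨ v j = 1 ∨ v j = -1)) →
      (L x = Letter.C ∧ L (x + 2 • v) = Letter.T) ∨
      (L (x + 2 • v) = Letter.C ∧ L x = Letter.T) := by
    intro x v h1 h2 h3
    have hc : (x, v) ∈ Cand := (hmemC _).mpr ⟨h1, h2, h3⟩
    rw [← hunionEq] at hc
    rcases Finset.mem_union.mp hc with hin | hin
    · rw [hmemS] at hin
      exact Or.inl ⟨hin.2.2.1, hin.2.2.2.2⟩
    · obtain ⟨r, hr, hgr⟩ := Finset.mem_image.mp hin
      have hinvr := hinv r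
      rw [hgr] at hinvr
      rw [hmemS] at hr
      have hr1 : r.1 = x + 2 • v := by rw [← hinvr]
      have hr2 : r.2 = -v := by rw [← hinvr]
      right
      constructor
      · rw [← hr1]; exact hr.2.2.1
      · have hT := hr.2.2.2.2
        rw [hr1, hr2, hcancel x v] at hT
        exact hT
  -- conclusion
  intro p hp
  have hlastmem : (Pi.single last 1 : Fin d → ZMod n) last = 1 := by simp
  have hsingle_ok : ∀ j : Fin d, j ≠ last →
      ((Pi.single last 1 : Fin d → ZMod n) j = 0 ∨ (Pi.single last 1 : Fin d → ZMod n) j = 1 ∨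
        (Pi.single last 1 : Fin d → ZMod n) j = -1) :=
    fun j hj => Or.inl (Pi.single_eq_of_ne hj 1)
  refine ⟨?_, ?_, ?_⟩
  · intro hC
    rcases key p (Pi.single last 1) hp (Or.inl hlastmem) hsingle_ok with ⟨_, h⟩ | ⟨_, h2⟩
    · exact h
    · rw [hC] at h2; exact Letter.noConfusion h2
  · intro hT
    rcases key p (Pi.single last 1) hp (Or.inl hlastmem) hsingle_ok with ⟨h1, _⟩ | ⟨h, _⟩
    · rw [hT] at h1; exact Letter.noConfusion h1
    · exact h
  · intro j hj
    set w : Fin d → ZMod n := Pi.single j 1 + Pi.single last 1 with hwdef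
    have hwlast : w last = 1 := by
      simp only [hwdef, Pi.add_apply, Pi.single_eq_same,
        Pi.single_eq_of_ne (Ne.symm hj)]
      ring
    have hwok : ∀ k : Fin d, k ≠ last → (w k = 0 ∨ w k = 1 ∨ w k = -1) := by
      intro k hk
      simp only [hwdef, Pi.add_apply, Pi.single_eq_of_ne hk]
      by_cases hkj : k = j
      · subst hkj; rw [Pi.single_eq_same]; right; left; ring
      · rw [Pi.single_eq_of_ne hkj]; left; ring
    have hp' : ((p + 2 • (Pi.single j 1 : Fin d → ZMod n)) last).val % 2 = 1 := by
      rw [hpar2]; exact hp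
    have heqn : p + 2 • (Pi.single j 1 : Fin d → ZMod n)
          + 2 • (Pi.single last 1 : Fin d → ZMod n)
        = p + 2 • w := by
      simp only [hwdef, two_nsmul]
      abel
    cases hLp : L p with
    | A =>
      exfalso
      have := (hA p).mp hLp
      omega
    | C =>
      rcases key p w hp (Or.inl hwlast) hwok with ⟨_, hT2⟩ | ⟨_, h2⟩
      · rcases key (p + 2 • Pi.single j 1) (Pi.single last 1) hp'
            (Or.inl hlastmem) hsingle_ok with ⟨hC', _⟩ | ⟨hC'', _⟩
        · rw [hC']
        · rw [heqn] at hC''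
          rw [hC''] at hT2
          exact Letter.noConfusion hT2
      · rw [hLp] at h2; exact Letter.noConfusion h2
    | T =>
      rcases key p w hp (Or.inl hwlast) hwok with ⟨h1, _⟩ | ⟨hC2, _⟩
      · rw [hLp] at h1; exact Letter.noConfusion h1
      · rcases key (p + 2 • Pi.single j 1) (Pi.single last 1) hp'
            (Or.inl hlastmem) hsingle_ok with ⟨_, hT'⟩ | ⟨_, hT''⟩
        · rw [heqn] at hT'
          rw [hT'] at hC2
          exact Letter.noConfusion hC2
        · exact hT''
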